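/- arXiv:1803.00123 — 2 statements merged into one kernel-verified Lean document; each statement's English description precedes it below -/
import Mathlib

section
/- The representation (s_i)_{i=0}^{N-1} of the Cuntz algebra O_N on ℓ²(Ω) defined by s_0 e_∅ = e_∅, s_0 e_ω = e_{0ω} (ω ≠ ∅), s_i e_ω = e_{iω} (i ≠ 0) is irreducible: any bounded operator commuting with all s_i and s_i* is a scalar multiple of the identity. -/
/-!
The vacuum `e_∅` is fixed by `s_0`, so the Cuntz relations `s_i* s_0 = δ_{i0}` force
`s_i* e_∅ = δ_{i0} e_∅`. A commutant element `T` preserves this property, and unfolding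
`⟪e_{iω}, T e_∅⟫ = ⟪e_ω, s_i* T e_∅⟫` letter by letter shows that `T e_∅` has no component
along any nonempty word (such a word does not end in `0`). Hence `T e_∅ = c e_∅`, and since every
basis vector is `s_{i₁} ⋯ s_{iₖ} e_∅`, commuting `T` past the `s_i` gives `T e_ω = c e_ω`.
-/

open ContinuousLinearMap

/-- The index set `Ω`: finite words over `{0,…,N-1}` that do not end in `0`
(including the empty word). -/
def Words (N : ℕ) [NeZero N] : Type := {l : List (Fin N) // l.getLast? ≠ some 0}

/-- Prepending a digit to a word in `Ω`: `cons i ω = iω`, except `cons 0 ∅ = ∅`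
(implementing `s_0 e_∅ = e_∅`, `s_0 e_ω = e_{0ω}` for `ω ≠ ∅`, `s_i e_ω = e_{iω}`). -/
def consW {N : ℕ} [NeZero N] (i : Fin N) (ω : Words N) : Words N :=
  if h : ω.val = [] ∧ i = 0 then ω
  else ⟨i :: ω.val, by
    rcases ω with ⟨l, hl⟩
    match l with
    | [] =>
      simp only [List.getLast?_singleton, ne_eq, Option.some.injEq]
      exact fun hi => h ⟨rfl, hi⟩
    | a :: l' => simpa [List.getLast?_cons_cons] using hl⟩

namespace HilbertBasis

variable {ι 𝕜 E : Type*} [RCLike 𝕜] [NormedAddCommGroup E] [InnerProductSpace 𝕜 E]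

theorem eq_inner_smul_of_inner_eq_zero (b : HilbertBasis ι 𝕜 E) {v : E} (i : ι)
    (hv : ∀ j ≠ i, inner 𝕜 (b j) v = 0) : v = inner 𝕜 (b i) v • b i := by
  have hsingle : HasSum (fun j => b.repr v j • b j) (b.repr v i • b i) :=
    hasSum_single i fun j hj => by rw [b.repr_apply_apply, hv j hj, zero_smul]
  rw [← b.repr_apply_apply]
  exact (b.hasSum_repr v).unique hsingle

theorem continuousLinearMap_ext {F : Type*} [TopologicalSpace F] [AddCommMonoid F] [Module 𝕜 F]
    [T2Space F] (b : HilbertBasis ι 𝕜 E) {f g : E →L[𝕜] F} (h : ∀ i, f (b i) = g (b i)) :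
    f = g :=
  ContinuousLinearMap.ext_on (Submodule.dense_iff_topologicalClosure_eq_top.mpr b.dense_span)
    (by rintro _ ⟨i, rfl⟩; exact h i)

end HilbertBasis

theorem List.getLast?_ne_of_cons {α : Type*} {a b : α} {l : List α}
    (h : (b :: l).getLast? ≠ some a) : l.getLast? ≠ some a := by
  cases l with
  | nil => simp
  | cons c l => simpa [List.getLast?_cons_cons] using h

namespace Words

variable {N : ℕ} [NeZero N]

def nil : Words N := ⟨[], by simp⟩

theorem consW_zero_nil : consW (0 : Fin N) nil = nil :=
  dif_pos ⟨rfl, rfl⟩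

theorem consW_mk {i : Fin N} {l : List (Fin N)} (h : (i :: l).getLast? ≠ some 0) :
    consW i ⟨l, List.getLast?_ne_of_cons h⟩ = ⟨i :: l, h⟩ := by
  refine dif_neg ?_
  rintro ⟨rfl, rfl⟩
  simp at h

@[elab_as_elim]
theorem induction_consW {P : Words N → Prop} (nil : P nil)
    (cons : ∀ i ω, P ω → P (consW i ω)) (ω : Words N) : P ω := by
  obtain ⟨l, hl⟩ := ω
  induction l with
  | nil => exact nil
  | cons i l ih =>
    rw [← consW_mk hl]
    exact cons i _ (ih _)

end Words

section CuntzRepresentation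

variable {𝕜 H : Type*} [RCLike 𝕜] [NormedAddCommGroup H] [InnerProductSpace 𝕜 H]
  [CompleteSpace H]

theorem adjoint_apply_of_apply_eq_self {ι : Type*} [DecidableEq ι] {s : ι → H →L[𝕜] H}
    (hcuntz : ∀ i j, adjoint (s i) ∘L s j = if i = j then 1 else 0)
    {j : ι} {v : H} (hv : s j v = v) (i : ι) :
    adjoint (s i) v = if i = j then v else 0 := by
  conv_lhs => rw [← hv, ← comp_apply, hcuntz]
  split_ifs <;> rfl

variable {N : ℕ} [NeZero N] {s : Fin N → H →L[𝕜] H} {e : HilbertBasis (Words N) 𝕜 H}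

theorem eq_inner_smul_nil_of_adjoint_apply
    (hs : ∀ i ω, s i (e ω) = e (consW i ω)) {v : H}
    (hv : ∀ i, adjoint (s i) v = if i = 0 then v else 0) :
    v = inner 𝕜 (e Words.nil) v • e Words.nil := by
  refine e.eq_inner_smul_of_inner_eq_zero _ fun ω => ?_
  induction ω using Words.induction_consW with
  | nil => exact fun h => absurd rfl h
  | cons i ω ih =>
    intro hne
    rw [← hs, ← adjoint_inner_right, hv]
    split_ifs with hi
    · subst hi
      exact ih fun h => hne (by rw [h, Words.consW_zero_nil])
    · exact inner_zero_right _

end CuntzRepresentation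

theorem stmt_6_general {H : Type*} [NormedAddCommGroup H] [InnerProductSpace ℂ H]
    [CompleteSpace H] {N : ℕ} [NeZero N]
    (e : HilbertBasis (Words N) ℂ H)
    (s : Fin N → H →L[ℂ] H)
    (hs : ∀ (i : Fin N) (ω : Words N), s i (e ω) = e (consW i ω))
    (hcuntz1 : ∀ i j, adjoint (s i) ∘L s j = if i = j then 1 else 0)
    (T : H →L[ℂ] H)
    (hT : ∀ i, T ∘L s i = s i ∘L T ∧ T ∘L adjoint (s i) = adjoint (s i) ∘L T) :
    ∃ c : ℂ, T = c • (1 : H →L[ℂ] H) := by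
  have hvacuum : s 0 (e Words.nil) = e Words.nil := by rw [hs, Words.consW_zero_nil]
  have hTvacuum : ∀ i, adjoint (s i) (T (e Words.nil)) =
      if i = 0 then T (e Words.nil) else 0 := fun i => by
    rw [← comp_apply, ← (hT i).2, comp_apply,
      adjoint_apply_of_apply_eq_self hcuntz1 hvacuum i, apply_ite T, map_zero]
  set c := inner ℂ (e Words.nil) (T (e Words.nil))
  refine ⟨c, e.continuousLinearMap_ext fun ω => ?_⟩
  induction ω using Words.induction_consW with
  | nil => exact eq_inner_smul_nil_of_adjoint_apply hs hTvacuum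
  | cons i ω ih =>
    rw [← hs, ← comp_apply, (hT i).1, comp_apply, ih]
    simp

/-- The representation `(s_i)` of the Cuntz algebra `O_N` on `ℓ²(Ω)` given
on the canonical basis by `s_0 e_∅ = e_∅`, `s_0 e_ω = e_{0ω}` (`ω ≠ ∅`),
`s_i e_ω = e_{iω}` (`i ≠ 0`) is irreducible: any bounded operator commuting with all
`s_i` and `s_i*` is a scalar multiple of the identity. -/
theorem stmt_6 {H : Type*} [NormedAddCommGroup H] [InnerProductSpace ℂ H]
    [CompleteSpace H] {N : ℕ} [NeZero N]
    (e : HilbertBasis (Words N) ℂ H)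
    (s : Fin N → H →L[ℂ] H)
    (hs : ∀ (i : Fin N) (ω : Words N), s i (e ω) = e (consW i ω))
    (hcuntz1 : ∀ i j, adjoint (s i) ∘L s j = if i = j then 1 else 0)
    (hcuntz2 : ∑ i : Fin N, s i ∘L adjoint (s i) = 1)
    (T : H →L[ℂ] H)
    (hT : ∀ i, T ∘L s i = s i ∘L T ∧ T ∘L adjoint (s i) = adjoint (s i) ∘L T) :
    ∃ c : ℂ, T = c • (1 : H →L[ℂ] H) :=
  stmt_6_general e s hs hcuntz1 T hT
end

section
/- Let A be a unitary matrix such that √N·A is an N×N Hadamard matrix, and let p ≥ 1. Then μ(A^{⊗p}) = N^p, where μ is the uncertainty constant min_{f≠0} |supp(f)|·|supp(Af)|. -/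
noncomputable def suppCard {n : ℕ} (f : Fin n → ℂ) : ℕ := (Function.support f).ncard

noncomputable def mu {n : ℕ} (A : Matrix (Fin n) (Fin n) ℂ) : ℕ :=
  sInf {m | ∃ f : Fin n → ℂ, f ≠ 0 ∧ m = suppCard f * suppCard (A.mulVec f)}

noncomputable def kron {N M : ℕ} [NeZero N] (A : Matrix (Fin N) (Fin N) ℂ)
    (B : Matrix (Fin M) (Fin M) ℂ) : Matrix (Fin (N * M)) (Fin (N * M)) ℂ :=
  fun i j =>
    A ⟨i.val % N, Nat.mod_lt _ (Nat.pos_of_ne_zero (NeZero.ne N))⟩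
      ⟨j.val % N, Nat.mod_lt _ (Nat.pos_of_ne_zero (NeZero.ne N))⟩ *
    B ⟨i.val / N, (Nat.div_lt_iff_lt_mul (Nat.pos_of_ne_zero (NeZero.ne N))).mpr
        (mul_comm N M ▸ i.isLt)⟩
      ⟨j.val / N, (Nat.div_lt_iff_lt_mul (Nat.pos_of_ne_zero (NeZero.ne N))).mpr
        (mul_comm N M ▸ j.isLt)⟩

noncomputable def kronPow {N : ℕ} [NeZero N] (A : Matrix (Fin N) (Fin N) ℂ) :
    (p : ℕ) → Matrix (Fin (N ^ p)) (Fin (N ^ p)) ℂ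
  | 0 => 1
  | p + 1 => Matrix.reindex (finCongr (by rw [pow_succ]; ring)) (finCongr (by rw [pow_succ]; ring))
      (kron A (kronPow A p))

/-!
A unitary `M` preserves `∑ ‖f j‖²`, while if all entries of `M` have norm at most `c`, each
coordinate of `M f` is at most `c · ∑_{j ∈ supp f} ‖f j‖ ≤ c · √(|supp f| · ∑ ‖f j‖²)`.
Summing squares over `supp (M f)` gives `1 ≤ c² · |supp f| · |supp (M f)|`; for a flat unitary
`c = 1/√n`, so `n ≤ |supp f| · |supp (M f)|`, with equality at a basis vector. Kronecker powers
of a flat unitary are again flat unitaries.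
-/

open Matrix Function

theorem sum_toFinset_support_comp {α β M : Type*} [Fintype α] [Zero β] [AddCommMonoid M]
    {f : α → β} [Fintype (support f)] {g : β → M} (hg : g 0 = 0) :
    ∑ j ∈ (support f).toFinset, g (f j) = ∑ j, g (f j) :=
  Finset.sum_subset (Finset.subset_univ _) fun j _ hj => by simp_all

section Uncertainty

variable {𝕜 ι : Type*} [RCLike 𝕜] [Fintype ι]

theorem sum_norm_sq_mulVec_of_mem_unitaryGroup [DecidableEq ι] {M : Matrix ι ι 𝕜}
    (hM : M ∈ unitaryGroup ι 𝕜) (f : ι → 𝕜) :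
    ∑ i, ‖(M *ᵥ f) i‖ ^ 2 = ∑ j, ‖f j‖ ^ 2 := by
  have star_dotProduct_self : ∀ g : ι → 𝕜, star g ⬝ᵥ g = ((∑ i, ‖g i‖ ^ 2 : ℝ) : 𝕜) := by
    intro g
    simp [dotProduct, RCLike.conj_mul]
  have h : star (M *ᵥ f) ⬝ᵥ (M *ᵥ f) = star f ⬝ᵥ f := by
    rw [star_mulVec, dotProduct_mulVec, vecMul_vecMul, ← star_eq_conjTranspose,
      mem_unitaryGroup_iff'.mp hM, vecMul_one]
  exact_mod_cast (star_dotProduct_self _).symm.trans (h.trans (star_dotProduct_self f))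

theorem norm_mulVec_apply_sq_le {M : Matrix ι ι 𝕜} {c : ℝ} (hc : ∀ i j, ‖M i j‖ ≤ c)
    (f : ι → 𝕜) (i : ι) :
    ‖(M *ᵥ f) i‖ ^ 2 ≤ c ^ 2 * (support f).ncard * ∑ j, ‖f j‖ ^ 2 := by
  classical
  have hc0 : 0 ≤ c := (norm_nonneg _).trans (hc i i)
  set S := (support f).toFinset
  have hnorm : ‖(M *ᵥ f) i‖ ≤ c * ∑ j ∈ S, ‖f j‖ := calc
    ‖(M *ᵥ f) i‖ ≤ ∑ j, ‖M i j‖ * ‖f j‖ := by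
      simpa [mulVec, dotProduct] using norm_sum_le Finset.univ fun j => M i j * f j
    _ ≤ ∑ j, c * ‖f j‖ := by gcongr with j; exact hc i j
    _ = c * ∑ j ∈ S, ‖f j‖ := by rw [← Finset.mul_sum, sum_toFinset_support_comp norm_zero]
  calc ‖(M *ᵥ f) i‖ ^ 2 ≤ c ^ 2 * (∑ j ∈ S, ‖f j‖) ^ 2 := by
        rw [← mul_pow]; gcongr
    _ ≤ c ^ 2 * (S.card * ∑ j ∈ S, ‖f j‖ ^ 2) := by gcongr; exact sq_sum_le_card_mul_sum_sq
    _ = c ^ 2 * (support f).ncard * ∑ j, ‖f j‖ ^ 2 := by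
      rw [Set.ncard_eq_toFinset_card', sum_toFinset_support_comp (g := (‖·‖ ^ 2)) (by simp),
        mul_assoc]

theorem one_le_sq_mul_ncard_support_mul_ncard_support_mulVec [DecidableEq ι]
    {M : Matrix ι ι 𝕜} (hM : M ∈ unitaryGroup ι 𝕜) {c : ℝ} (hc : ∀ i j, ‖M i j‖ ≤ c)
    {f : ι → 𝕜} (hf : f ≠ 0) :
    1 ≤ c ^ 2 * (support f).ncard * (support (M *ᵥ f)).ncard := by
  classical
  set E := ∑ j, ‖f j‖ ^ 2
  have hE : 0 < E := by
    obtain ⟨j, hj⟩ := Function.ne_iff.mp hf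
    exact Finset.sum_pos' (fun _ _ => by positivity) ⟨j, Finset.mem_univ j, by positivity⟩
  have : E * 1 ≤ E * (c ^ 2 * (support f).ncard * (support (M *ᵥ f)).ncard) := calc
    E * 1 = ∑ i ∈ (support (M *ᵥ f)).toFinset, ‖(M *ᵥ f) i‖ ^ 2 := by
      rw [mul_one, sum_toFinset_support_comp (g := (‖·‖ ^ 2)) (by simp),
        sum_norm_sq_mulVec_of_mem_unitaryGroup hM f]
    _ ≤ ∑ _i ∈ (support (M *ᵥ f)).toFinset, c ^ 2 * (support f).ncard * E :=
      Finset.sum_le_sum fun i _ => norm_mulVec_apply_sq_le hc f i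
    _ = E * (c ^ 2 * (support f).ncard * (support (M *ᵥ f)).ncard) := by
      rw [Finset.sum_const, nsmul_eq_mul, ← Set.ncard_eq_toFinset_card']; ring
  exact le_of_mul_le_mul_left this hE

end Uncertainty

theorem mu_eq_of_mem_unitaryGroup_of_norm_eq {n : ℕ} [NeZero n] {M : Matrix (Fin n) (Fin n) ℂ}
    (hM : M ∈ unitaryGroup (Fin n) ℂ) (hflat : ∀ i j, ‖M i j‖ = 1 / √n) :
    mu M = n := by
  have hn : (0 : ℝ) < n := by exact_mod_cast Nat.pos_of_ne_zero (NeZero.ne n)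
  have lower : ∀ f : Fin n → ℂ, f ≠ 0 → n ≤ suppCard f * suppCard (M *ᵥ f) := by
    intro f hf
    have h := one_le_sq_mul_ncard_support_mul_ncard_support_mulVec hM (hflat · · |>.le) hf
    rw [div_pow, one_pow, Real.sq_sqrt hn.le, mul_assoc, one_div_mul_eq_div,
      one_le_div hn] at h
    exact_mod_cast h
  have basis_vector :
      suppCard (Pi.single 0 1 : Fin n → ℂ) * suppCard (M *ᵥ Pi.single 0 1) = n := by
    have hcol : support (M *ᵥ Pi.single 0 1) = Set.univ := by
      refine Set.eq_univ_of_forall fun i => mem_support.mpr ?_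
      rw [mulVec_single_one, col_apply, ← norm_ne_zero_iff, hflat]
      positivity
    rw [suppCard, suppCard, hcol, Set.ncard_univ, Nat.card_eq_fintype_card, Fintype.card_fin,
      Pi.support_single_of_ne one_ne_zero, Set.ncard_singleton, one_mul]
  refine le_antisymm (Nat.sInf_le ⟨_, by simp, basis_vector.symm⟩)
    (le_csInf ⟨n, _, by simp, basis_vector.symm⟩ ?_)
  rintro m ⟨f, hf, rfl⟩
  exact lower f hf

def finMulEquivProd (N M : ℕ) : Fin (N * M) ≃ Fin N × Fin M :=
  (finCongr (mul_comm N M)).trans (finProdFinEquiv.symm.trans (Equiv.prodComm _ _))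

theorem kron_eq_submatrix_kronecker {N M : ℕ} [NeZero N] (A : Matrix (Fin N) (Fin N) ℂ)
    (B : Matrix (Fin M) (Fin M) ℂ) :
    kron A B = (kroneckerMap (· * ·) A B).submatrix (finMulEquivProd N M) (finMulEquivProd N M) :=
  rfl

theorem submatrix_equiv_mem_unitaryGroup {m n R : Type*} [Fintype m] [DecidableEq m] [Fintype n]
    [DecidableEq n] [CommRing R] [StarRing R] {A : Matrix n n R} (hA : A ∈ unitaryGroup n R)
    (e : m ≃ n) : A.submatrix e e ∈ unitaryGroup m R := by
  rw [mem_unitaryGroup_iff'] at hA ⊢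
  rw [star_eq_conjTranspose, conjTranspose_submatrix, submatrix_mul_equiv,
    ← star_eq_conjTranspose, hA, submatrix_one_equiv]

theorem kron_mem_unitaryGroup {N M : ℕ} [NeZero N] {A : Matrix (Fin N) (Fin N) ℂ}
    {B : Matrix (Fin M) (Fin M) ℂ} (hA : A ∈ unitaryGroup (Fin N) ℂ)
    (hB : B ∈ unitaryGroup (Fin M) ℂ) : kron A B ∈ unitaryGroup (Fin (N * M)) ℂ := by
  rw [kron_eq_submatrix_kronecker]
  exact submatrix_equiv_mem_unitaryGroup (kronecker_mem_unitary hA hB) _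

theorem kronPow_mem_unitaryGroup {N : ℕ} [NeZero N] {A : Matrix (Fin N) (Fin N) ℂ}
    (hA : A ∈ unitaryGroup (Fin N) ℂ) (p : ℕ) : kronPow A p ∈ unitaryGroup (Fin (N ^ p)) ℂ := by
  induction p with
  | zero => exact one_mem _
  | succ p ih => exact submatrix_equiv_mem_unitaryGroup (kron_mem_unitaryGroup hA ih) _

theorem norm_kronPow_apply {N : ℕ} [NeZero N] {A : Matrix (Fin N) (Fin N) ℂ} {c : ℝ}
    (hA : ∀ i j, ‖A i j‖ = c) (p : ℕ) (i j : Fin (N ^ p)) : ‖kronPow A p i j‖ = c ^ p := by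
  induction p with
  | zero =>
    have : Subsingleton (Fin (N ^ 0)) := by rw [pow_zero]; infer_instance
    obtain rfl : i = j := Subsingleton.elim _ _
    simp [kronPow]
  | succ p ih =>
    simp only [kronPow, reindex_apply, submatrix_apply, kron, norm_mul, hA, ih, pow_succ']

theorem stmt_14_general {N : ℕ} [NeZero N] (A : Matrix (Fin N) (Fin N) ℂ)
    (hA : A ∈ Matrix.unitaryGroup (Fin N) ℂ)
    (hHad : ∀ i j, ‖A i j‖ = 1 / Real.sqrt N)
    (p : ℕ) :
    mu (kronPow A p) = N ^ p := by
  refine mu_eq_of_mem_unitaryGroup_of_norm_eq (kronPow_mem_unitaryGroup hA p) fun i j => ?_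
  have sqrt_pow : √(N : ℝ) ^ p = √((N ^ p : ℕ) : ℝ) := by
    rw [← Real.sqrt_sq (by positivity : 0 ≤ √(N : ℝ) ^ p), ← pow_mul, mul_comm, pow_mul,
      Real.sq_sqrt (by positivity), Nat.cast_pow]
  rw [norm_kronPow_apply hHad, div_pow, one_pow, sqrt_pow]

/-- For a scaled Hadamard matrix `A`, `μ(A^{⊗p}) = N^p`. -/
theorem stmt_14 {N : ℕ} [NeZero N] (A : Matrix (Fin N) (Fin N) ℂ)
    (hA : A ∈ Matrix.unitaryGroup (Fin N) ℂ)
    (hHad : ∀ i j, ‖A i j‖ = 1 / Real.sqrt N)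
    (p : ℕ) (hp : 1 ≤ p) :
    mu (kronPow A p) = N ^ p :=
  stmt_14_general A hA hHad p
end
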